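/- Let $A$ be a Noetherian local ring which is either complete or has uncountable residue field. Let $\{\mathfrak{p}_i\}_{i=1}^\infty$ be a countable family of prime ideals of $A$, let $\mathfrak{a}$ be an ideal of $A$, and let $x \in A$. If the coset $x + \mathfrak{a}$ is contained in $\bigcup_{i=1}^\infty \mathfrak{p}_i$, then $x + \mathfrak{a} \subseteq \mathfrak{p}_j$ for some $j$. -/

import Mathlib

open IsLocalRing CategoryTheory

noncomputable section

/-- The depth of a module over a local ring: the supremum of lengths of
regular sequences contained in the maximal ideal. -/
def moduleDepth (R M : Type) [CommRing R] [IsLocalRing R]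
    [AddCommGroup M] [Module R M] : ℕ∞ :=
  sSup {n : ℕ∞ | ∃ rs : List R, (rs.length : ℕ∞) = n ∧
    (∀ r ∈ rs, r ∈ maximalIdeal R) ∧ RingTheory.Sequence.IsRegular M rs}

/-- A maximal Cohen-Macaulay module over a local ring: finitely generated, nonzero,
with depth equal to the Krull dimension of the ring. -/
def IsMCM (R M : Type) [CommRing R] [IsLocalRing R]
    [AddCommGroup M] [Module R M] : Prop :=
  Module.Finite R M ∧ Nontrivial M ∧ (moduleDepth R M : WithBot ℕ∞) = ringKrullDim R

/-- A Cohen-Macaulay local ring. -/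
def IsCMLocalRing (R : Type) [CommRing R] [IsLocalRing R] : Prop :=
  (moduleDepth R R : WithBot ℕ∞) = ringKrullDim R

/-- The Ext group `Ext^n_R(M, N)` as an `R`-module. -/
def ExtMod (R : Type) [CommRing R] (n : ℕ) (M N : Type)
    [AddCommGroup M] [Module R M] [AddCommGroup N] [Module R N] : Type :=
  ((Ext R (ModuleCat R) n).obj (Opposite.op (ModuleCat.of R M))).obj (ModuleCat.of R N)

instance (R : Type) [CommRing R] (n : ℕ) (M N : Type)
    [AddCommGroup M] [Module R M] [AddCommGroup N] [Module R N] :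
    AddCommGroup (ExtMod R n M N) := by
  unfold ExtMod; infer_instance

instance (R : Type) [CommRing R] (n : ℕ) (M N : Type)
    [AddCommGroup M] [Module R M] [AddCommGroup N] [Module R N] :
    Module R (ExtMod R n M N) := by
  unfold ExtMod; infer_instance

/-- An indecomposable module. -/
def IsIndecomposable (R M : Type) [CommRing R] [AddCommGroup M] [Module R M] : Prop :=
  Nontrivial M ∧ ∀ N₁ N₂ : Submodule R M, IsCompl N₁ N₂ → N₁ = ⊥ ∨ N₂ = ⊥

/-- Countable Cohen-Macaulay type: there is a countable set of finitely presented
modules containing, up to isomorphism, all maximal Cohen-Macaulay modules. -/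
def HasCountableCMType (R : Type) [CommRing R] [IsLocalRing R] : Prop :=
  ∃ S : Set (Σ n : ℕ, Submodule R (Fin n → R)), S.Countable ∧
    ∀ (M : Type) [AddCommGroup M] [Module R M], IsMCM R M →
      ∃ s ∈ S, Nonempty (M ≃ₗ[R] ((Fin s.1 → R) ⧸ s.2))

/-- Injective dimension at most `n`, via vanishing of Ext. -/
def HasInjDimLE (R Y : Type) [CommRing R] [AddCommGroup Y] [Module R Y] (n : ℕ) : Prop :=
  ∀ (M : Type) [AddCommGroup M] [Module R M] (i : ℕ), n < i → Subsingleton (ExtMod R i M Y)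

/-- Finite injective dimension. -/
def HasFiniteInjDim (R Y : Type) [CommRing R] [AddCommGroup Y] [Module R Y] : Prop :=
  ∃ n, HasInjDimLE R Y n

/-- A regular local ring: Noetherian local, whose maximal ideal is generated by
`dim R` elements. -/
def IsRegularLocalRing' (A : Type) [CommRing A] : Prop :=
  IsNoetherianRing A ∧ ∃ h : IsLocalRing A, ∃ s : Finset A,
    Ideal.span (s : Set A) = @IsLocalRing.maximalIdeal A _ h ∧
    ((s.card : ℕ∞) : WithBot ℕ∞) = ringKrullDim A

/-- A catenary ring: any two saturated chains of primes with the same endpoints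
have the same length. -/
def IsCatenaryRing (A : Type) [CommRing A] : Prop :=
  ∀ c d : RelSeries {q : PrimeSpectrum A × PrimeSpectrum A | q.1 ⋖ q.2},
    c.head = d.head → c.last = d.last → c.length = d.length

/-- A regular (not necessarily local) Noetherian ring: all localizations at primes
are regular local rings. -/
def IsRegularRing' (A : Type) [CommRing A] : Prop :=
  ∀ p : PrimeSpectrum A, IsRegularLocalRing' (Localization.AtPrime p.asIdeal)

/-- An excellent local ring: Noetherian, universally catenary, J-2 (regular loci of
finite type algebras are open), with geometrically regular formal fibres. -/
def IsExcellentLocalRing (R : Type) [CommRing R] [IsLocalRing R] : Prop :=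
  IsNoetherianRing R ∧
  (∀ n : ℕ, IsCatenaryRing (MvPolynomial (Fin n) R)) ∧
  (∀ (A : Type) [CommRing A] [Algebra R A], Algebra.FiniteType R A →
      IsOpen {p : PrimeSpectrum A | IsRegularLocalRing' (Localization.AtPrime p.asIdeal)}) ∧
  (∀ p : PrimeSpectrum R,
    ∀ (L : Type) [Field L] [Algebra (ResidueField (Localization.AtPrime p.asIdeal)) L],
      FiniteDimensional (ResidueField (Localization.AtPrime p.asIdeal)) L →
      letI : Algebra R L := ((algebraMap (ResidueField (Localization.AtPrime p.asIdeal)) L).comp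
        (algebraMap R (ResidueField (Localization.AtPrime p.asIdeal)))).toAlgebra
      IsRegularRing' (TensorProduct R L (AdicCompletion (maximalIdeal R) R)))

/-- A free resolution of `M` by finitely generated free modules. -/
structure FreeRes (R : Type) [CommRing R] (M : Type) [AddCommGroup M] [Module R M] where
  rank : ℕ → ℕ
  aug : (Fin (rank 0) → R) →ₗ[R] M
  d : (i : ℕ) → ((Fin (rank (i+1)) → R) →ₗ[R] (Fin (rank i) → R))
  aug_surjective : Function.Surjective aug
  exact_zero : LinearMap.range (d 0) = LinearMap.ker aug
  exact_succ : ∀ i, LinearMap.range (d (i+1)) = LinearMap.ker (d i)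

/-- A minimal free resolution over a local ring. -/
structure MinFreeRes (R : Type) [CommRing R] [IsLocalRing R]
    (M : Type) [AddCommGroup M] [Module R M] extends FreeRes R M where
  minimal_aug : LinearMap.ker aug ≤ (maximalIdeal R) • ⊤
  minimal : ∀ i, LinearMap.range (d i) ≤ (maximalIdeal R) • ⊤

/-- `S` is (isomorphic to) the `n`-th syzygy of `M` in the given free resolution;
the `0`-th syzygy is `M` itself, and for `n ≥ 1` it is the image of `d (n-1)`. -/
def FreeRes.IsSyzygy {R : Type} [CommRing R] {M : Type} [AddCommGroup M] [Module R M]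
    (F : FreeRes R M) (n : ℕ) (S : Type) [AddCommGroup S] [Module R S] : Prop :=
  match n with
  | 0 => Nonempty (S ≃ₗ[R] M)
  | k+1 => Nonempty (S ≃ₗ[R] LinearMap.range (F.d k))

/-- A canonical module for a Cohen-Macaulay local ring: a maximal Cohen-Macaulay
module of finite injective dimension whose endomorphism ring is `R`. -/
def HasCanonicalModule (R : Type) [CommRing R] [IsLocalRing R] : Prop :=
  ∃ ω : ModuleCat R, Module.Finite R ω ∧ IsMCM R ω ∧ HasFiniteInjDim R ω ∧
    Nonempty (Module.End R ω ≃ₐ[R] R)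

/-- The height of an ideal: the infimum of dimensions of localizations at primes
containing it. -/
def idealHeight (R : Type) [CommRing R] (J : Ideal R) : WithBot ℕ∞ :=
  sInf {h | ∃ p : PrimeSpectrum R, J ≤ p.asIdeal ∧
    h = ringKrullDim (Localization.AtPrime p.asIdeal)}

end

/-!
Put `m = maximalIdeal A` and suppose the coset `x + a` is covered by the primes `p i`.

If the residue field is uncountable, take generators `v₀, …, vₙ₋₁` of `a` and the polynomial
`f = x + X (v₀ + v₁ X + ⋯ + vₙ₋₁ Xⁿ⁻¹)`, whose values all lie in `x + a`. Uncountably many residue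
classes `t` send `f t` into one and the same `p i`; modulo `p i` the polynomial `f` then has
infinitely many roots in a domain, so it vanishes, and `x` and every `vⱼ` lie in `p i`.

If `A` is complete and no `p i` contains `x + a`, build `yₙ ∈ x + a` and strictly increasing `kₙ`
with `yₙ₊₁ - yₙ ∈ m ^ kₙ` such that `yₙ + m ^ kₙ` misses `p 0, …, p (n - 1)`: to pass `p n`, add to
`yₙ` an element of `a * m ^ kₙ` outside `p n` (if `yₙ ∈ p n`), and then Krull's intersection theorem
gives a new exponent. The limit of `yₙ` stays in `x + a`, because ideals of a Noetherian local ring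
are `m`-adically closed, but it lies in no `p i`.
-/

open Polynomial Set

theorem Ideal.mem_of_forall_mem_sup_pow {R : Type*} [CommRing R] [IsNoetherianRing R]
    {I J : Ideal R} (hJ : J ≤ Ideal.jacobson ⊥) {y : R} (hy : ∀ k : ℕ, y ∈ I ⊔ J ^ k) :
    y ∈ I := by
  have := IsHausdorff.of_le_jacobson J (R ⧸ I) hJ
  rw [← Ideal.Quotient.eq_zero_iff_mem]
  refine IsHausdorff.haus this _ fun k => ?_
  obtain ⟨u, hu, v, hv, rfl⟩ := Submodule.mem_sup.mp (hy k)
  rw [SModEq.zero, map_add, Ideal.Quotient.eq_zero_iff_mem.mpr hu, zero_add]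
  have := Submodule.smul_mem_smul hv (Submodule.mem_top (x := (1 : R ⧸ I)))
  rwa [Algebra.smul_def, mul_one, Ideal.Quotient.algebraMap_eq] at this

theorem Polynomial.eval_mem_of_forall_coeff_mem {R : Type*} [CommRing R] {I : Ideal R}
    {f : R[X]} (h : ∀ k, f.coeff k ∈ I) (t : R) : f.eval t ∈ I := by
  rw [eval_eq_sum, sum_def]
  exact I.sum_mem fun k _ => I.mul_mem_right _ (h k)

theorem Polynomial.coeff_mem_of_infinite_image_setOf_eval_mem {R : Type*} [CommRing R]
    {P : Ideal R} [P.IsPrime] (f : R[X])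
    (h : (Ideal.Quotient.mk P '' {t | f.eval t ∈ P}).Infinite) (k : ℕ) : f.coeff k ∈ P := by
  have hf : f.map (Ideal.Quotient.mk P) = 0 := by
    refine eq_zero_of_infinite_isRoot _ (h.mono ?_)
    rintro _ ⟨t, ht, rfl⟩
    simpa [IsRoot, eval_map, eval₂_at_apply, Ideal.Quotient.eq_zero_iff_mem] using ht
  rw [← Ideal.Quotient.eq_zero_iff_mem, ← coeff_map, hf, coeff_zero]

theorem IsLocalRing.exists_forall_coeff_mem_of_uncountable {R : Type*} [CommRing R]
    [IsLocalRing R] [Uncountable (ResidueField R)] {ι : Type*} [Countable ι]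
    (p : ι → Ideal R) (hp : ∀ i, (p i).IsPrime) (f : R[X]) (h : ∀ t, ∃ i, f.eval t ∈ p i) :
    ∃ i, ∀ k, f.coeff k ∈ p i := by
  have hcover : ⋃ i, residue R '' {t | f.eval t ∈ p i} = univ := by
    rw [← image_iUnion, (iUnion_eq_univ_iff (f := fun i => {t | f.eval t ∈ p i})).mpr h,
      image_univ, residue_surjective.range_eq]
  obtain ⟨i, hi⟩ : ∃ i, ¬ (residue R '' {t | f.eval t ∈ p i}).Countable := by
    by_contra! hcount
    exact not_countable_univ (hcover ▸ countable_iUnion hcount)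
  have := hp i
  refine ⟨i, coeff_mem_of_infinite_image_setOf_eval_mem f ?_⟩
  let toResidue : R ⧸ p i →+* ResidueField R := Ideal.Quotient.lift (p i) (residue R)
    fun r hr => (residue_eq_zero_iff r).mpr (le_maximalIdeal (hp i).ne_top hr)
  refine Infinite.of_image toResidue ?_
  rw [← image_comp]
  exact fun hfin => hi hfin.countable

theorem countable_prime_avoidance_of_uncountable {R : Type*} [CommRing R] [IsNoetherianRing R]
    [IsLocalRing R] [Uncountable (ResidueField R)] {ι : Type*} [Countable ι]
    (p : ι → Ideal R) (hp : ∀ i, (p i).IsPrime) (a : Ideal R) (x : R)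
    (h : ∀ z ∈ a, ∃ i, x + z ∈ p i) : ∃ i, x ∈ p i ∧ a ≤ p i := by
  classical
  obtain ⟨n, v, hv⟩ := Submodule.fg_iff_exists_fin_generating_family.mp (IsNoetherian.noetherian a)
  have hcoeff : ∀ k, (ofFn n v).coeff k ∈ a := by
    intro k
    by_cases hk : k < n
    · rw [ofFn_coeff_eq_val_of_lt v hk, ← hv]
      exact Submodule.subset_span ⟨_, rfl⟩
    · rw [ofFn_coeff_eq_zero_of_ge v (not_lt.mp hk)]
      exact a.zero_mem
  obtain ⟨i, hi⟩ := exists_forall_coeff_mem_of_uncountable p hp (C x + X * ofFn n v) fun t => by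
    simpa using h _ (a.mul_mem_left t (eval_mem_of_forall_coeff_mem hcoeff t))
  refine ⟨i, by simpa using hi 0, ?_⟩
  rw [← hv, Submodule.span_le]
  rintro _ ⟨j, rfl⟩
  simpa [ofFn_coeff_eq_val_of_lt v j.2] using hi (j + 1)

theorem IsPrecomplete.exists_forall_sub_mem_pow {R : Type*} [CommRing R] {I : Ideal R}
    [IsPrecomplete I R] {y : ℕ → R} {k : ℕ → ℕ} (hk : StrictMono k)
    (hy : ∀ n, y (n + 1) - y n ∈ I ^ k n) : ∃ L, ∀ n, L - y n ∈ I ^ k n := by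
  have hmono : ∀ m n, m ≤ n → y n - y m ∈ I ^ k m := by
    intro m n hmn
    induction n, hmn using Nat.le_induction with
    | base => simp
    | succ n hmn ih =>
      rw [← sub_add_sub_cancel]
      exact add_mem (Ideal.pow_le_pow_right (hk.monotone hmn) (hy n)) ih
  obtain ⟨L, hL⟩ := IsPrecomplete.prec ‹_› (f := y) fun {m n} hmn => by
    rw [SModEq.sub_mem, smul_eq_mul, Ideal.mul_top, ← neg_mem_iff, neg_sub]
    exact Ideal.pow_le_pow_right hk.le_apply (hmono m n hmn)
  refine ⟨L, fun n => ?_⟩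
  have hLk := hL (k n)
  rw [SModEq.sub_mem, smul_eq_mul, Ideal.mul_top, ← neg_mem_iff, neg_sub] at hLk
  rw [← sub_add_sub_cancel _ (y (k n))]
  exact add_mem hLk (hmono n (k n) hk.le_apply)

theorem Ideal.IsPrime.exists_mem_inf_pow_add_notMem {R : Type*} [CommRing R] {P J a : Ideal R}
    (hP : P.IsPrime) (hJ : ¬ J ≤ P) {y : R} (hy : y ∈ P → ¬ a ≤ P) (k : ℕ) :
    ∃ c ∈ a ⊓ J ^ k, y + c ∉ P := by
  by_cases hyP : y ∈ P
  · have : ¬ a * J ^ k ≤ P := by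
      rw [hP.mul_le]
      exact not_or_intro (hy hyP) fun h => hJ (hP.le_of_pow_le h)
    obtain ⟨c, hc, hcP⟩ := SetLike.not_le_iff_exists.mp this
    exact ⟨c, Ideal.mem_inf.mpr ⟨Ideal.mul_le_left hc, Ideal.mul_le_right hc⟩,
      fun h => hcP ((P.add_mem_iff_right hyP).mp h)⟩
  · exact ⟨0, zero_mem _, by simpa using hyP⟩

section Complete

variable {R : Type*} [CommRing R] [IsNoetherianRing R] [IsLocalRing R]

/-- `y ∈ x + a`, and the ball `y + m ^ k` misses `p 0, …, p (n - 1)`. -/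
def AvoidsBallBelow (p : ℕ → Ideal R) (a : Ideal R) (x : R) (n : ℕ) (s : R × ℕ) : Prop :=
  s.1 - x ∈ a ∧ ∀ i < n, s.1 ∉ p i ⊔ maximalIdeal R ^ s.2

theorem AvoidsBallBelow.exists_succ {p : ℕ → Ideal R} {a : Ideal R} {x : R} {n : ℕ} {s : R × ℕ}
    (hs : AvoidsBallBelow p a x n s) (hpn : (p n).IsPrime) (hmn : ¬ maximalIdeal R ≤ p n)
    (hxn : x ∈ p n → ¬ a ≤ p n) :
    ∃ s', AvoidsBallBelow p a x (n + 1) s' ∧ s'.1 - s.1 ∈ maximalIdeal R ^ s.2 ∧ s.2 < s'.2 := by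
  obtain ⟨y, k⟩ := s
  obtain ⟨hya, hyk⟩ := hs
  obtain ⟨c, ⟨hca, hck⟩, hcn⟩ := hpn.exists_mem_inf_pow_add_notMem hmn (y := y)
    (fun hyn han => hxn (by simpa using (p n).sub_mem hyn (han hya)) han) k
  obtain ⟨k', hk'⟩ : ∃ k', y + c ∉ p n ⊔ maximalIdeal R ^ k' := by
    by_contra! H
    exact hcn (Ideal.mem_of_forall_mem_sup_pow (maximalIdeal_le_jacobson _) H)
  have hmono : ∀ {i l}, l ≤ max k' (k + 1) → y + c ∉ p i ⊔ maximalIdeal R ^ l →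
      y + c ∉ p i ⊔ maximalIdeal R ^ max k' (k + 1) :=
    fun hl H H' => H (sup_le_sup_left (Ideal.pow_le_pow_right hl) (p _) H')
  refine ⟨(y + c, max k' (k + 1)), ⟨?_, fun i hi => ?_⟩, by simpa using hck, by lia⟩
  · simpa [add_sub_right_comm] using a.add_mem hya hca
  · rcases Nat.lt_succ_iff_lt_or_eq.mp hi with hi | rfl
    · refine hmono (l := k) (by lia) fun H => hyk i hi ?_
      exact (Submodule.add_mem_iff_left _ (Submodule.mem_sup_right hck)).mp H
    · exact hmono (le_max_left _ _) hk'

theorem countable_prime_avoidance_of_isAdicComplete [IsAdicComplete (maximalIdeal R) R]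
    (p : ℕ → Ideal R) (hp : ∀ i, (p i).IsPrime) (a : Ideal R) (x : R)
    (h : ∀ z ∈ a, ∃ i, x + z ∈ p i) : ∃ i, x ∈ p i ∧ a ≤ p i := by
  by_contra! hne
  set m := maximalIdeal R
  have hpm : ∀ i, p i ≤ m := fun i => le_maximalIdeal (hp i).ne_top
  have hm : ∀ i, ¬ m ≤ p i := by
    intro i hmi
    have hx : x ∈ m := by simpa using (h 0 a.zero_mem).elim fun j hj => hpm j hj
    refine hne i (hmi hx) fun z hz => hmi ?_
    obtain ⟨j, hj⟩ := h z hz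
    simpa using m.sub_mem (hpm j hj) hx
  choose! next hnext using fun n (s : R × ℕ) (hs : AvoidsBallBelow p a x n s) =>
    hs.exists_succ (hp n) (hm n) (hne n)
  let s : ℕ → R × ℕ := fun n => Nat.rec (x, 0) next n
  have hs : ∀ n, AvoidsBallBelow p a x n (s n) := fun n => by
    induction n with
    | zero => simp [AvoidsBallBelow, s]
    | succ n ih => exact (hnext n _ ih).1
  have hk : StrictMono fun n => (s n).2 :=
    strictMono_nat_of_lt_succ fun n => (hnext n _ (hs n)).2.2
  obtain ⟨L, hL⟩ := IsPrecomplete.exists_forall_sub_mem_pow (y := fun n => (s n).1) hk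
    fun n => (hnext n _ (hs n)).2.1
  have hLa : L - x ∈ a := by
    refine Ideal.mem_of_forall_mem_sup_pow (maximalIdeal_le_jacobson _) fun n => ?_
    rw [← sub_add_sub_cancel _ (s n).1, sup_comm]
    exact Submodule.add_mem_sup (Ideal.pow_le_pow_right hk.le_apply (hL n)) (hs n).1
  obtain ⟨i, hi⟩ := h _ hLa
  refine (hs (i + 1)).2 i i.lt_succ_self ?_
  rw [← sub_sub_cancel L (s (i + 1)).1]
  exact Submodule.sub_mem _ (Submodule.mem_sup_left (by simpa using hi))
    (Submodule.mem_sup_right (hL (i + 1)))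

end Complete

/-- Countable prime avoidance (Burch). -/
theorem countable_prime_avoidance (A : Type) [CommRing A] [IsNoetherianRing A] [IsLocalRing A]
    (hA : IsAdicComplete (maximalIdeal A) A ∨ Uncountable (ResidueField A))
    (p : ℕ → Ideal A) (hp : ∀ i, (p i).IsPrime) (a : Ideal A) (x : A)
    (h : {y : A | ∃ z ∈ a, y = x + z} ⊆ ⋃ i, (p i : Set A)) :
    ∃ j, {y : A | ∃ z ∈ a, y = x + z} ⊆ (p j : Set A) := by
  have hcover : ∀ z ∈ a, ∃ i, x + z ∈ p i := fun z hz => mem_iUnion.mp (h ⟨z, hz, rfl⟩)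
  obtain ⟨j, hxj, haj⟩ : ∃ j, x ∈ p j ∧ a ≤ p j := by
    rcases hA with hA | hA
    · exact countable_prime_avoidance_of_isAdicComplete p hp a x hcover
    · exact countable_prime_avoidance_of_uncountable p hp a x hcover
  exact ⟨j, by rintro _ ⟨z, hz, rfl⟩; exact (p j).add_mem hxj (haj hz)⟩
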